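/- (Generalized Lagrange identity on ℝ.) Let (u,u1) be an l-pair with output f and (v,v1) an l⁺-pair with output g, and assume u, f, v, g all belong to L²(ℝ,ℂ^m). Then ∫_ℝ (f(x), v(x)) dx − ∫_ℝ (u(x), g(x)) dx = [u,v](+∞) − [u,v](−∞), where [u,v](t) := (u(t), v1(t)) − (u1(t), v(t)) and [u,v](±∞) denote the (existing, finite) limits of [u,v](t) as t → ±∞. -/

import Mathlib

open MeasureTheory Matrix Filter Topology

noncomputable section

abbrev Em (m : ℕ) := EuclideanSpace ℂ (Fin m)

/-- Matrix action on `ℂ^m`. -/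
def mv (m : ℕ) (A : Matrix (Fin m) (Fin m) ℂ) (x : Em m) : Em m := WithLp.toLp 2 (A.mulVec x)

/-- `(u,u1)` is an l-pair with output `f` for the Shin–Zettl data `(Q,s)`. -/
def IsLpair (m : ℕ) (Q s : ℝ → Matrix (Fin m) (Fin m) ℂ)
    (u u1 f : ℝ → Em m) : Prop :=
  LocallyIntegrable f volume ∧ Continuous u ∧ Continuous u1 ∧
  (∀ a x : ℝ, u x = u a + ∫ t in a..x, (mv m (Q t) (u t) + u1 t)) ∧
  (∀ a x : ℝ, u1 x = u1 a +
     ∫ t in a..x, (mv m (s t - Q t ^ 2) (u t) - mv m (Q t) (u1 t) - f t))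

/-- `(v,v1)` is an l⁺-pair with output `g`: same with `Q,s` replaced by their
conjugate transposes. -/
def IsLplusPair (m : ℕ) (Q s : ℝ → Matrix (Fin m) (Fin m) ℂ)
    (v v1 g : ℝ → Em m) : Prop :=
  IsLpair m (fun t => (Q t)ᴴ) (fun t => (s t)ᴴ) v v1 g

/-- `Q` is locally square-integrable (entrywise). -/
def LocL2 (m : ℕ) (Q : ℝ → Matrix (Fin m) (Fin m) ℂ) : Prop :=
  ∀ i j : Fin m, ∀ K : Set ℝ, IsCompact K →
    MemLp (fun x => Q x i j) 2 (volume.restrict K)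

/-- `s` is locally integrable (entrywise). -/
def LocL1 (m : ℕ) (s : ℝ → Matrix (Fin m) (Fin m) ℂ) : Prop :=
  ∀ i j : Fin m, LocallyIntegrable (fun x => s x i j) volume

/-- The `ℂ^m` inner product `(a,b) = ∑ i, aᵢ * conj bᵢ`. -/
def dotc (m : ℕ) (a b : Em m) : ℂ := ∑ i, a i * (starRingEnd ℂ) (b i)

/-- `⟨u,v⟩ = ∫ (u(x), v(x)) dx`. -/
def pairing (m : ℕ) (u v : ℝ → Em m) : ℂ := ∫ x : ℝ, dotc m (u x) (v x)

abbrev L2m (m : ℕ) := Lp (Em m) 2 (volume : Measure ℝ)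

/-- The maximal graph `G`. -/
def Gmax (m : ℕ) (Q s : ℝ → Matrix (Fin m) (Fin m) ℂ) : Set (L2m m × L2m m) :=
  {p | ∃ u u1 f : ℝ → Em m, IsLpair m Q s u u1 f ∧
        u =ᵐ[volume] p.1 ∧ f =ᵐ[volume] p.2}

/-- The preminimal graph `G₀₀`. -/
def G00 (m : ℕ) (Q s : ℝ → Matrix (Fin m) (Fin m) ℂ) : Set (L2m m × L2m m) :=
  {p | ∃ u u1 f : ℝ → Em m, IsLpair m Q s u u1 f ∧ HasCompactSupport u ∧
        u =ᵐ[volume] p.1 ∧ f =ᵐ[volume] p.2}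

/-- The maximal graph `G⁺`. -/
def GmaxPlus (m : ℕ) (Q s : ℝ → Matrix (Fin m) (Fin m) ℂ) : Set (L2m m × L2m m) :=
  {p | ∃ v v1 g : ℝ → Em m, IsLplusPair m Q s v v1 g ∧
        v =ᵐ[volume] p.1 ∧ g =ᵐ[volume] p.2}

/-- The preminimal graph `G₀₀⁺`. -/
def G00Plus (m : ℕ) (Q s : ℝ → Matrix (Fin m) (Fin m) ℂ) : Set (L2m m × L2m m) :=
  {p | ∃ v v1 g : ℝ → Em m, IsLplusPair m Q s v v1 g ∧ HasCompactSupport v ∧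
        v =ᵐ[volume] p.1 ∧ g =ᵐ[volume] p.2}

/-! Write `[u,v] = (u, v₁) - (u₁, v)`. Both pairs consist of primitives of locally integrable
functions, for which the product rule still holds in integrated form. Applied to `(u, v₁)` and
`(u₁, v)` it gives `[u,v](b) - [u,v](a) = ∫_a^b ((f,v) - (u,g))`: all terms containing `Q` and `s`
cancel because `(A x, y) = (x, Aᴴ y)`. By Cauchy–Schwarz the integrand is integrable on `ℝ`, so
`[u,v]` has limits at `±∞` whose difference is the integral over `ℝ`. -/

open Set

theorem MeasureTheory.LocallyIntegrable.integrableOn_Ioc {E : Type*} [NormedAddCommGroup E]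
    {P : ℝ → E} (hP : LocallyIntegrable P) (a b : ℝ) : IntegrableOn P (Ioc a b) :=
  (hP.integrableOn_isCompact isCompact_Icc).mono_set Ioc_subset_Icc_self

theorem MeasureTheory.LocallyIntegrable.intervalIntegrable {E : Type*} [NormedAddCommGroup E]
    {P : ℝ → E} (hP : LocallyIntegrable P) (a b : ℝ) : IntervalIntegrable P volume a b :=
  (hP.integrableOn_isCompact isCompact_uIcc).intervalIntegrable

section Primitive

variable {E F G : Type*} [NormedAddCommGroup E] [NormedSpace ℝ E]
  [NormedAddCommGroup F] [NormedSpace ℝ F] [NormedAddCommGroup G] [NormedSpace ℝ G]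

theorem MeasureTheory.LocallyIntegrable.bilin_continuous (B : E →L[ℝ] F →L[ℝ] G) {P : ℝ → E}
    {q : ℝ → F} (hP : LocallyIntegrable P) (hq : Continuous q) :
    LocallyIntegrable (fun t => B (P t) (q t)) := by
  refine locallyIntegrable_iff.2 fun K hK => ?_
  obtain ⟨C, hC⟩ := hK.exists_bound_of_continuousOn hq.continuousOn
  exact B.integrable_of_bilin_of_bdd_right C (hP.integrableOn_isCompact hK)
    hq.aestronglyMeasurable ((ae_restrict_iff' hK.measurableSet).2 (ae_of_all _ hC))

theorem MeasureTheory.LocallyIntegrable.continuous_bilin (B : E →L[ℝ] F →L[ℝ] G) {p : ℝ → E}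
    {Q : ℝ → F} (hp : Continuous p) (hQ : LocallyIntegrable Q) :
    LocallyIntegrable (fun t => B (p t) (Q t)) :=
  hQ.bilin_continuous B.flip hp

variable {p P : ℝ → E} {q Q : ℝ → F}

theorem continuous_of_primitive (hP : LocallyIntegrable P)
    (hp : ∀ x y, p y = p x + ∫ t in x..y, P t) : Continuous p := by
  rw [funext (hp 0)]
  exact continuous_const.add (intervalIntegral.continuous_primitive hP.intervalIntegrable 0)

theorem setIntegral_Ioc_indicator_Iic_of_primitive (hp : ∀ x y, p y = p x + ∫ t in x..y, P t)
    {a b t : ℝ} (ht : t ∈ Ioc a b) :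
    ∫ r in Ioc a b, (Iic t).indicator P r = p t - p a := by
  rw [integral_indicator measurableSet_Iic, Measure.restrict_restrict measurableSet_Iic,
    Iic_inter_Ioc_of_le ht.2, ← intervalIntegral.integral_of_le ht.1.le, hp a t]
  abel

theorem locallyIntegrable_bilin_primitive (B : E →L[ℝ] F →L[ℝ] G) (hP : LocallyIntegrable P)
    (hQ : LocallyIntegrable Q) (hp : ∀ x y, p y = p x + ∫ t in x..y, P t)
    (hq : ∀ x y, q y = q x + ∫ t in x..y, Q t) :
    LocallyIntegrable (fun t => B (P t) (q t) + B (p t) (Q t)) :=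
  (hP.bilin_continuous B (continuous_of_primitive hQ hq)).add
    (hQ.continuous_bilin B (continuous_of_primitive hP hp))

variable [CompleteSpace E] [CompleteSpace F] [CompleteSpace G]

/-- Fubini on the square `(a, b]²`, cut along its diagonal. -/
theorem bilin_setIntegral_Ioc_eq_add (B : E →L[ℝ] F →L[ℝ] G) (hP : LocallyIntegrable P)
    (hQ : LocallyIntegrable Q) (hp : ∀ x y, p y = p x + ∫ t in x..y, P t)
    (hq : ∀ x y, q y = q x + ∫ t in x..y, Q t) (a b : ℝ) :
    B (∫ t in Ioc a b, P t) (∫ t in Ioc a b, Q t) =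
      (∫ t in Ioc a b, B (P t) (q t - q a)) + ∫ t in Ioc a b, B (p t - p a) (Q t) := by
  set μ := volume.restrict (Ioc a b)
  have hPμ : Integrable P μ := hP.integrableOn_Ioc a b
  have hQμ : Integrable Q μ := hQ.integrableOn_Ioc a b
  set K : ℝ × ℝ → G := fun z => B (P z.1) (Q z.2)
  have hK : Integrable K (μ.prod μ) :=
    hPμ.op_fst_snd (by fun_prop) ⟨‖B‖, B.le_opNorm₂⟩ hQμ
  set S : Set (ℝ × ℝ) := {z | z.2 < z.1}
  have hS : MeasurableSet S := measurableSet_lt measurable_snd measurable_fst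
  have lower : ∫ z, S.indicator K z ∂μ.prod μ = ∫ t in Ioc a b, B (P t) (q t - q a) := by
    rw [← integral_integral (f := fun t r => S.indicator K (t, r)) (hK.indicator hS)]
    refine integral_congr_ae ?_
    filter_upwards [ae_restrict_mem measurableSet_Ioc] with t ht
    have hQt : ∫ r, (Iio t).indicator Q r ∂μ = q t - q a := by
      rw [integral_congr_ae (ae_restrict_of_ae (indicator_ae_eq_of_ae_eq_set Iio_ae_eq_Iic)),
        setIntegral_Ioc_indicator_Iic_of_primitive hq ht]
    rw [← hQt, ← (B (P t)).integral_comp_comm (hQμ.indicator measurableSet_Iio)]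
    congr 1 with r
    by_cases hrt : r < t <;> simp [S, K, hrt]
  have upper : ∫ z, Sᶜ.indicator K z ∂μ.prod μ = ∫ r in Ioc a b, B (p r - p a) (Q r) := by
    rw [← integral_integral (f := fun t r => Sᶜ.indicator K (t, r)) (hK.indicator hS.compl),
      integral_integral_swap (f := fun t r => Sᶜ.indicator K (t, r)) (hK.indicator hS.compl)]
    refine integral_congr_ae ?_
    filter_upwards [ae_restrict_mem measurableSet_Ioc] with r hr
    rw [← setIntegral_Ioc_indicator_Iic_of_primitive hp hr]
    refine Eq.trans ?_ ((B.flip (Q r)).integral_comp_comm (hPμ.indicator measurableSet_Iic))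
    congr 1 with t
    by_cases htr : t ≤ r <;> simp [S, K, htr]
  rw [← lower, ← upper, ← integral_add (hK.indicator hS) (hK.indicator hS.compl)]
  simp_rw [← Pi.add_apply (S.indicator K), indicator_self_add_compl]
  exact (integral_prod_bilin B hPμ hQμ).symm

theorem integral_bilin_primitive_eq_sub (B : E →L[ℝ] F →L[ℝ] G) (hP : LocallyIntegrable P)
    (hQ : LocallyIntegrable Q) (hp : ∀ x y, p y = p x + ∫ t in x..y, P t)
    (hq : ∀ x y, q y = q x + ∫ t in x..y, Q t) (a b : ℝ) :
    ∫ t in a..b, (B (P t) (q t) + B (p t) (Q t)) = B (p b) (q b) - B (p a) (q a) := by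
  wlog hab : a ≤ b generalizing a b
  · rw [intervalIntegral.integral_symm, this b a (le_of_not_ge hab), neg_sub]
  have hpc := continuous_of_primitive hP hp
  have hqc := continuous_of_primitive hQ hq
  have hsplit : ∀ t, B (P t) (q t) + B (p t) (Q t) =
      (B (P t) (q a) + B (p a) (Q t)) + (B (P t) (q t - q a) + B (p t - p a) (Q t)) := by
    intro t
    simp only [map_sub, _root_.sub_apply]
    abel
  have hPab : ∫ t in Ioc a b, P t = p b - p a := by
    rw [← intervalIntegral.integral_of_le hab, hp a b, add_sub_cancel_left]
  have hQab : ∫ t in Ioc a b, Q t = q b - q a := by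
    rw [← intervalIntegral.integral_of_le hab, hq a b, add_sub_cancel_left]
  have I₁ : IntegrableOn (fun t => B (P t) (q a)) (Ioc a b) :=
    (hP.bilin_continuous B continuous_const).integrableOn_Ioc a b
  have I₂ : IntegrableOn (fun t => B (p a) (Q t)) (Ioc a b) :=
    (hQ.continuous_bilin B continuous_const).integrableOn_Ioc a b
  have I₃ : IntegrableOn (fun t => B (P t) (q t - q a)) (Ioc a b) :=
    (hP.bilin_continuous B (hqc.sub continuous_const)).integrableOn_Ioc a b
  have I₄ : IntegrableOn (fun t => B (p t - p a) (Q t)) (Ioc a b) :=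
    (hQ.continuous_bilin B (hpc.sub continuous_const)).integrableOn_Ioc a b
  have I₁₂ : IntegrableOn (fun t => B (P t) (q a) + B (p a) (Q t)) (Ioc a b) := I₁.add I₂
  have I₃₄ : IntegrableOn (fun t => B (P t) (q t - q a) + B (p t - p a) (Q t)) (Ioc a b) :=
    I₃.add I₄
  rw [intervalIntegral.integral_of_le hab, funext hsplit, integral_add I₁₂ I₃₄,
    integral_add I₁ I₂, integral_add I₃ I₄, ← bilin_setIntegral_Ioc_eq_add B hP hQ hp hq,
    (B (p a)).integral_comp_comm (hQ.integrableOn_Ioc a b),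
    show ∫ t in Ioc a b, B (P t) (q a) = B (∫ t in Ioc a b, P t) (q a) from
      (B.flip (q a)).integral_comp_comm (hP.integrableOn_Ioc a b), hPab, hQab]
  simp only [map_sub, _root_.sub_apply]
  abel

end Primitive

theorem MeasureTheory.Integrable.exists_tendsto_of_intervalIntegral_eq_sub {E : Type*}
    [NormedAddCommGroup E] [NormedSpace ℝ E] {φ W : ℝ → E} (hφ : Integrable φ)
    (hW : ∀ a b, ∫ t in a..b, φ t = W b - W a) :
    ∃ A B, Tendsto W atTop (𝓝 A) ∧ Tendsto W atBot (𝓝 B) ∧ ∫ t, φ t = A - B := by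
  refine ⟨W 0 + ∫ t in Ioi 0, φ t, W 0 - ∫ t in Iic 0, φ t, ?_, ?_, ?_⟩
  · refine (tendsto_const_nhds.add
      (intervalIntegral_tendsto_integral_Ioi 0 hφ.integrableOn tendsto_id)).congr fun b => ?_
    rw [id, hW, add_sub_cancel]
  · refine (tendsto_const_nhds.sub
      (intervalIntegral_tendsto_integral_Iic 0 hφ.integrableOn tendsto_id)).congr fun a => ?_
    rw [id, hW, sub_sub_cancel]
  · rw [← intervalIntegral.integral_Iic_add_Ioi hφ.integrableOn hφ.integrableOn]
    abel

section Dotc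

variable {m : ℕ}

theorem dotc_eq_inner (a b : Em m) : dotc m a b = inner ℂ b a := by
  simp [dotc, PiLp.inner_apply, RCLike.inner_apply]

theorem dotc_add_left (a a' b : Em m) : dotc m (a + a') b = dotc m a b + dotc m a' b := by
  simp [dotc, add_mul, Finset.sum_add_distrib]

theorem dotc_sub_left (a a' b : Em m) : dotc m (a - a') b = dotc m a b - dotc m a' b := by
  simp [dotc, sub_mul, Finset.sum_sub_distrib]

theorem dotc_add_right (a b b' : Em m) : dotc m a (b + b') = dotc m a b + dotc m a b' := by
  simp [dotc, mul_add, Finset.sum_add_distrib]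

theorem dotc_sub_right (a b b' : Em m) : dotc m a (b - b') = dotc m a b - dotc m a b' := by
  simp [dotc, mul_sub, Finset.sum_sub_distrib]

theorem dotc_mv (A : Matrix (Fin m) (Fin m) ℂ) (x y : Em m) :
    dotc m (mv m A x) y = dotc m x (mv m Aᴴ y) := by
  simp only [dotc, mv, mulVec, dotProduct, conjTranspose_apply, map_sum, Finset.sum_mul,
    Finset.mul_sum, map_mul, RCLike.star_def, Complex.conj_conj]
  rw [Finset.sum_comm]
  exact Finset.sum_congr rfl fun j _ => Finset.sum_congr rfl fun i _ => by ring

theorem mv_sub (A B : Matrix (Fin m) (Fin m) ℂ) (x : Em m) :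
    mv m (A - B) x = mv m A x - mv m B x := by
  simp [mv, sub_mulVec]

variable (m) in
/-- `dotc` as a real-bilinear map; over `ℂ` it is only sesquilinear. -/
def dotcBilin : Em m →L[ℝ] Em m →L[ℝ] ℂ :=
  LinearMap.mkContinuous₂
    (LinearMap.mk₂ ℝ (dotc m) dotc_add_left
      (fun c a b => by simp [dotc, Finset.mul_sum, mul_assoc]) dotc_add_right
      (fun c a b => by simp [dotc, Finset.mul_sum, mul_left_comm]))
    1 (fun a b => by
      simpa [dotc_eq_inner, mul_comm ‖a‖] using norm_inner_le_norm (𝕜 := ℂ) b a)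

@[simp]
theorem dotcBilin_apply (a b : Em m) : dotcBilin m a b = dotc m a b := rfl

theorem MeasureTheory.MemLp.integrable_dotc {u v : ℝ → Em m} (hu : MemLp u 2) (hv : MemLp v 2) :
    Integrable (fun x => dotc m (u x) (v x)) :=
  memLp_one_iff_integrable.1 ((dotcBilin m).memLp_of_bilin 1 hu hv)

end Dotc

section Coefficients

variable {m : ℕ}

theorem LocL2.locL1 {Q : ℝ → Matrix (Fin m) (Fin m) ℂ} (hQ : LocL2 m Q) : LocL1 m Q :=
  fun i j => locallyIntegrable_iff.2 fun K hK =>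
    have : IsFiniteMeasure (volume.restrict K) := isFiniteMeasure_restrict.2 hK.measure_lt_top.ne
    (hQ i j K hK).integrable one_le_two

theorem LocL2.locL1_sq {Q : ℝ → Matrix (Fin m) (Fin m) ℂ} (hQ : LocL2 m Q) :
    LocL1 m (fun t => Q t ^ 2) := by
  intro i j
  simp only [sq, mul_apply]
  refine locallyIntegrable_finsetSum _ fun k _ => locallyIntegrable_iff.2 fun K hK => ?_
  exact memLp_one_iff_integrable.1 ((hQ k j K hK).mul (hQ i k K hK))

theorem LocL1.sub {A B : ℝ → Matrix (Fin m) (Fin m) ℂ} (hA : LocL1 m A) (hB : LocL1 m B) :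
    LocL1 m (fun t => A t - B t) :=
  fun i j => (hA i j).sub (hB i j)

theorem LocL1.conjTranspose {A : ℝ → Matrix (Fin m) (Fin m) ℂ} (hA : LocL1 m A) :
    LocL1 m (fun t => (A t)ᴴ) :=
  fun i j x => (Complex.conjCLE : ℂ →L[ℝ] ℂ).integrableAtFilter_comp (hA j i x)

theorem LocL1.locallyIntegrable_mv {A : ℝ → Matrix (Fin m) (Fin m) ℂ} (hA : LocL1 m A)
    {w : ℝ → Em m} (hw : Continuous w) : LocallyIntegrable (fun t => mv m (A t) (w t)) := by
  refine locallyIntegrable_iff.2 fun K hK => integrable_piLp_iff.2 fun i => ?_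
  simp only [mv, mulVec, dotProduct]
  exact (locallyIntegrable_finsetSum _ fun j _ =>
    (hA i j).mul_continuous (by fun_prop)).integrableOn_isCompact hK

end Coefficients

section Lagrange

variable {m : ℕ} {Q s : ℝ → Matrix (Fin m) (Fin m) ℂ}

def lagrangeBracket (m : ℕ) (u u1 v v1 : ℝ → Em m) (t : ℝ) : ℂ :=
  dotc m (u t) (v1 t) - dotc m (u1 t) (v t)

theorem IsLpair.locallyIntegrable_integrands {u u1 f : ℝ → Em m} (hQ : LocL1 m Q)
    (hsQ : LocL1 m (fun t => s t - Q t ^ 2)) (hu : IsLpair m Q s u u1 f) :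
    LocallyIntegrable (fun t => mv m (Q t) (u t) + u1 t) ∧
      LocallyIntegrable (fun t => mv m (s t - Q t ^ 2) (u t) - mv m (Q t) (u1 t) - f t) := by
  obtain ⟨hf, hu, hu1, -, -⟩ := hu
  exact ⟨(hQ.locallyIntegrable_mv hu).add hu1.locallyIntegrable,
    ((hsQ.locallyIntegrable_mv hu).sub (hQ.locallyIntegrable_mv hu1)).sub hf⟩

theorem dotc_lagrange_integrand (A S : Matrix (Fin m) (Fin m) ℂ) (x x1 y y1 F G : Em m) :
    (dotc m (mv m A x + x1) y1 + dotc m x (mv m (Sᴴ - Aᴴ ^ 2) y - mv m Aᴴ y1 - G))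
      - (dotc m (mv m (S - A ^ 2) x - mv m A x1 - F) y + dotc m x1 (mv m Aᴴ y + y1))
      = dotc m F y - dotc m x G := by
  simp only [mv_sub, dotc_add_left, dotc_sub_left, dotc_add_right, dotc_sub_right, dotc_mv,
    conjTranspose_pow]
  ring

theorem IsLpair.intervalIntegral_eq_lagrangeBracket_sub {u u1 f v v1 g : ℝ → Em m} (hQ : LocL2 m Q) (hs : LocL1 m s)
    (hu : IsLpair m Q s u u1 f) (hv : IsLplusPair m Q s v v1 g) (a b : ℝ) :
    ∫ t in a..b, (dotc m (f t) (v t) - dotc m (u t) (g t)) =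
      lagrangeBracket m u u1 v v1 b - lagrangeBracket m u u1 v v1 a := by
  have hsQ : LocL1 m (fun t => s t - Q t ^ 2) := hs.sub hQ.locL1_sq
  obtain ⟨hU, hU1⟩ := hu.locallyIntegrable_integrands hQ.locL1 hsQ
  obtain ⟨hV, hV1⟩ := hv.locallyIntegrable_integrands hQ.locL1.conjTranspose
    (by simpa [conjTranspose_pow] using hsQ.conjTranspose)
  obtain ⟨-, -, -, hu, hu1⟩ := hu
  obtain ⟨-, -, -, hv, hv1⟩ := hv
  have h₁ := integral_bilin_primitive_eq_sub (dotcBilin m) hU hV1 hu hv1 a b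
  have h₂ := integral_bilin_primitive_eq_sub (dotcBilin m) hU1 hV hu1 hv a b
  have i₁ := (locallyIntegrable_bilin_primitive (dotcBilin m) hU hV1 hu hv1).intervalIntegrable a b
  have i₂ := (locallyIntegrable_bilin_primitive (dotcBilin m) hU1 hV hu1 hv).intervalIntegrable a b
  simp only [dotcBilin_apply] at h₁ h₂ i₁ i₂
  rw [lagrangeBracket, lagrangeBracket, sub_sub_sub_comm, ← h₁, ← h₂,
    ← intervalIntegral.integral_sub i₁ i₂]
  refine intervalIntegral.integral_congr fun t _ => ?_
  exact (dotc_lagrange_integrand (Q t) (s t) (u t) (u1 t) (v t) (v1 t) (f t) (g t)).symm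

end Lagrange

theorem stmt6_general (m : ℕ) (Q s : ℝ → Matrix (Fin m) (Fin m) ℂ)
    (hQ : LocL2 m Q) (hs : LocL1 m s)
    (u u1 f v v1 g : ℝ → Em m)
    (hu : IsLpair m Q s u u1 f) (hv : IsLplusPair m Q s v v1 g)
    (huL2 : MemLp u 2 (volume : Measure ℝ)) (hfL2 : MemLp f 2 (volume : Measure ℝ))
    (hvL2 : MemLp v 2 (volume : Measure ℝ)) (hgL2 : MemLp g 2 (volume : Measure ℝ)) :
    ∃ A B : ℂ,
      Tendsto (fun t => dotc m (u t) (v1 t) - dotc m (u1 t) (v t)) atTop (𝓝 A) ∧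
      Tendsto (fun t => dotc m (u t) (v1 t) - dotc m (u1 t) (v t)) atBot (𝓝 B) ∧
      (∫ x : ℝ, dotc m (f x) (v x)) - (∫ x : ℝ, dotc m (u x) (g x)) = A - B := by
  have hfv := hfL2.integrable_dotc hvL2
  have hug := huL2.integrable_dotc hgL2
  rw [← integral_sub hfv hug]
  exact (hfv.sub hug).exists_tendsto_of_intervalIntegral_eq_sub (hu.intervalIntegral_eq_lagrangeBracket_sub hQ hs hv)

/-- Generalized Lagrange identity on `ℝ`. -/
theorem stmt6 (m : ℕ) (hm : 1 ≤ m) (Q s : ℝ → Matrix (Fin m) (Fin m) ℂ)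
    (hQ : LocL2 m Q) (hs : LocL1 m s)
    (u u1 f v v1 g : ℝ → Em m)
    (hu : IsLpair m Q s u u1 f) (hv : IsLplusPair m Q s v v1 g)
    (huL2 : MemLp u 2 (volume : Measure ℝ)) (hfL2 : MemLp f 2 (volume : Measure ℝ))
    (hvL2 : MemLp v 2 (volume : Measure ℝ)) (hgL2 : MemLp g 2 (volume : Measure ℝ)) :
    ∃ A B : ℂ,
      Tendsto (fun t => dotc m (u t) (v1 t) - dotc m (u1 t) (v t)) atTop (𝓝 A) ∧
      Tendsto (fun t => dotc m (u t) (v1 t) - dotc m (u1 t) (v t)) atBot (𝓝 B) ∧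
      (∫ x : ℝ, dotc m (f x) (v x)) - (∫ x : ℝ, dotc m (u x) (g x)) = A - B :=
  stmt6_general m Q s hQ hs u u1 f v v1 g hu hv huL2 hfL2 hvL2 hgL2
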